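/- arXiv:1908.09325 — 4 statements merged into one kernel-verified Lean document; each statement's English description precedes it below -/
import Mathlib

section
/- For all nonnegative real numbers x₄, x₆, x₈, x₁₀, x₁₂ satisfying 2x₄ + 3x₆ + 4x₈ + 5x₁₀ + 6x₁₂ ≤ 1, it holds that (1/3)·x₄ + (23/45)·x₆ + (1553/2520)·x₈ + (155273/226800)·x₁₀ + x₁₂ ≤ 23/135, and this bound is attained (at x₆ = 1/3 and all other variables 0). -/
/-- The linear program whose optimum value `23/135` yields the pathwidth bound for even
multigraphs: for all nonnegative reals `x₄, x₆, x₈, x₁₀, x₁₂` with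
`2x₄ + 3x₆ + 4x₈ + 5x₁₀ + 6x₁₂ ≤ 1` the objective
`(1/3)x₄ + (23/45)x₆ + (1553/2520)x₈ + (155273/226800)x₁₀ + x₁₂` is at most `23/135`,
and this bound is attained at `x₆ = 1/3` (all other variables `0`). -/
theorem lp_even_pathwidth :
    (∀ x4 x6 x8 x10 x12 : ℝ,
        0 ≤ x4 → 0 ≤ x6 → 0 ≤ x8 → 0 ≤ x10 → 0 ≤ x12 →
        2 * x4 + 3 * x6 + 4 * x8 + 5 * x10 + 6 * x12 ≤ 1 →
        (1 / 3) * x4 + (23 / 45) * x6 + (1553 / 2520) * x8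
          + (155273 / 226800) * x10 + x12 ≤ 23 / 135) ∧
    (2 * (0 : ℝ) + 3 * (1 / 3) + 4 * 0 + 5 * 0 + 6 * 0 ≤ 1 ∧
      (1 / 3) * (0 : ℝ) + (23 / 45) * (1 / 3) + (1553 / 2520) * 0
        + (155273 / 226800) * 0 + 0 = 23 / 135) := by
  refine ⟨fun x4 x6 x8 x10 x12 h4 h6 h8 h10 h12 hc => ?_, by norm_num, by norm_num⟩
  nlinarith [h4, h6, h8, h10, h12, hc]
end

section
/- For every homomorphic image P' of the path on k vertices, there exists a homomorphic image C' of the cycle on k+1 vertices such that P' is a subgraph of C'. -/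
/-- `Hhat` is a homomorphic image of `H`: there is a surjection `h` on the vertices mapping
the two endpoints of every edge to distinct vertices, such that the edges of `Hhat` are
exactly the images of the edges of `H`. -/
def IsHomImage {V W : Type} (H : SimpleGraph V) (Hhat : SimpleGraph W) : Prop :=
  ∃ h : V → W, Function.Surjective h ∧
    (∀ u v : V, H.Adj u v → h u ≠ h v) ∧
    (∀ x y : W, Hhat.Adj x y ↔ ∃ u v : V, H.Adj u v ∧ h u = x ∧ h v = y)

/-!
Extend a homomorphism `h` of the path `P_k` onto `P'` to the cycle `C_{k+1}` by sending the
extra vertex to a new vertex. Since `P_k` is an induced subgraph of `C_{k+1}`, adjacent vertices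
of the cycle still have distinct images, so the image `C'` of the cycle is a homomorphic image,
and `P'` sits inside it. Nothing about paths and cycles is used beyond this: every homomorphic
image of an induced subgraph `H ⊆ G` is contained in a homomorphic image of `G`.
-/

open Function SimpleGraph

theorem isHomImage_map {V W : Type} {G : SimpleGraph V} {g : V → W} (hg : Surjective g)
    (hsep : ∀ u v, G.Adj u v → g u ≠ g v) : IsHomImage G (G.map g) := by
  refine ⟨g, hg, hsep, fun x y => ⟨fun hxy => hxy.2, ?_⟩⟩
  rintro ⟨u, v, huv, rfl, rfl⟩
  exact map_adj_apply' huv (hsep u v huv)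

section ExtendOnRange

variable {V V' W : Type} {e : V → V'} (h : V → W)

open Classical in
variable (e) in
noncomputable def extendOnRange (x : V') : W ⊕ {x // x ∉ Set.range e} :=
  if hx : x ∈ Set.range e then .inl (h hx.choose) else .inr ⟨x, hx⟩

theorem extendOnRange_apply (he : Injective e) (a : V) :
    extendOnRange e h (e a) = .inl (h a) := by
  have hx : e a ∈ Set.range e := ⟨a, rfl⟩
  rw [extendOnRange, dif_pos hx, he hx.choose_spec]

theorem extendOnRange_of_notMem {x : V'} (hx : x ∉ Set.range e) :
    extendOnRange e h x = .inr ⟨x, hx⟩ := by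
  rw [extendOnRange, dif_neg hx]

theorem surjective_extendOnRange (he : Injective e) (hh : Surjective h) :
    Surjective (extendOnRange e h) := by
  rintro (w | ⟨x, hx⟩)
  · obtain ⟨a, rfl⟩ := hh w
    exact ⟨e a, extendOnRange_apply h he a⟩
  · exact ⟨x, extendOnRange_of_notMem h hx⟩

end ExtendOnRange

section Embedding

variable {V V' W : Type} {H : SimpleGraph V} {G : SimpleGraph V'}

theorem extendOnRange_ne_of_adj (e : H ↪g G) {h : V → W}
    (hsep : ∀ u v, H.Adj u v → h u ≠ h v) {x y : V'} (hxy : G.Adj x y) :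
    extendOnRange e h x ≠ extendOnRange e h y := by
  have he_apply := extendOnRange_apply h e.injective
  by_cases hx : x ∈ Set.range e <;> by_cases hy : y ∈ Set.range e
  · obtain ⟨a, rfl⟩ := hx
    obtain ⟨b, rfl⟩ := hy
    simpa [he_apply] using hsep a b (e.map_adj_iff.mp hxy)
  · obtain ⟨a, rfl⟩ := hx
    simp [he_apply, extendOnRange_of_notMem _ hy]
  · obtain ⟨b, rfl⟩ := hy
    simp [he_apply, extendOnRange_of_notMem _ hx]
  · simpa [extendOnRange_of_notMem _ hx, extendOnRange_of_notMem _ hy] using hxy.ne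

theorem IsHomImage.exists_isHomImage_isContained {P : SimpleGraph W} (hP : IsHomImage H P)
    (e : H ↪g G) :
    ∃ (W' : Type) (C : SimpleGraph W'), IsHomImage G C ∧ P ⊑ C := by
  obtain ⟨h, hsurj, hsep, hadj⟩ := hP
  refine ⟨_, G.map (extendOnRange e h),
    isHomImage_map (surjective_extendOnRange h e.injective hsurj)
      fun _ _ => extendOnRange_ne_of_adj e hsep,
    ⟨⟨⟨Sum.inl, ?_⟩, Sum.inl_injective⟩⟩⟩
  intro u v huv
  obtain ⟨a, b, hab, rfl, rfl⟩ := (hadj u v).mp huv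
  have hab' := e.map_adj_iff.mpr hab
  simpa [extendOnRange_apply h e.injective] using
    map_adj_apply' hab' (extendOnRange_ne_of_adj e hsep hab')

end Embedding

theorem Nat.sub_add_mod_succ_eq_one_iff {n x y : ℕ} (hx : x < n) (hy : y < n) :
    (n + 1 - y + x) % (n + 1) = 1 ↔ x = y + 1 := by
  rcases le_or_gt y x with hyx | hxy
  · rw [show n + 1 - y + x = x - y + (n + 1) by omega, Nat.add_mod_right,
      Nat.mod_eq_of_lt (by omega)]
    omega
  · rw [Nat.mod_eq_of_lt (by omega)]
    omega

theorem cycleGraph_adj_castSucc {k : ℕ} {a b : Fin k} :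
    (cycleGraph (k + 1)).Adj a.castSucc b.castSucc ↔ (pathGraph k).Adj a b := by
  rw [cycleGraph_adj', pathGraph_adj, Fin.val_sub, Fin.val_sub]
  simp only [Fin.val_castSucc]
  rw [Nat.sub_add_mod_succ_eq_one_iff a.isLt b.isLt, Nat.sub_add_mod_succ_eq_one_iff b.isLt a.isLt]
  omega

def pathGraphEmbeddingCycleGraph (k : ℕ) : pathGraph k ↪g cycleGraph (k + 1) where
  toEmbedding := Fin.castSuccEmb
  map_rel_iff' := cycleGraph_adj_castSucc

/-- For every homomorphic image `P'` of the path on `k` vertices, there exists a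
homomorphic image `C'` of the cycle on `k + 1` vertices such that `P'` is a subgraph of
`C'` (witnessed by an injection on the vertices preserving adjacency). -/
theorem hom_image_path_subgraph_hom_image_cycle (k : ℕ) (W : Type) (P' : SimpleGraph W)
    (hP : IsHomImage (SimpleGraph.pathGraph k) P') :
    ∃ (W' : Type) (C' : SimpleGraph W') (f : W → W'),
      IsHomImage (SimpleGraph.cycleGraph (k + 1)) C' ∧
      Function.Injective f ∧
      ∀ u v : W, P'.Adj u v → C'.Adj (f u) (f v) := by
  obtain ⟨W', C', hC', ⟨f⟩⟩ :=
    hP.exists_isHomImage_isContained (pathGraphEmbeddingCycleGraph k)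
  exact ⟨W', C', f.toHom, hC', f.injective, fun _ _ => f.toHom.map_adj⟩
end

section
/- Let 𝒞 be a Hamiltonian cycle of an edge-weighted graph and suppose that for every k' < k there is no improving k'-move on 𝒞. Then no improving k-swap fits into a reducible connection k-pattern. -/
/-!  Connection patterns for `k`-opt swaps (1-indexed: deleted edges are indexed by
`[k] = Finset.Icc 1 k`, pattern vertices `2i-1` and `2i` are the left and right endpoints
of the `i`-th deleted edge). -/

/-- The pattern vertices corresponding to an index set `X ⊆ [k]`:
`{2i−1, 2i : i ∈ X}`. -/
def pvs (X : Finset ℕ) : Finset ℕ := X.biUnion fun i => {2 * i - 1, 2 * i}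

/-- `N` is a perfect matching on the vertex set `S`: its edges are loopless, lie inside
`S`, and every vertex of `S` is on exactly one edge of `N`. -/
def IsMatchingOn (N : Finset (Sym2 ℕ)) (S : Finset ℕ) : Prop :=
  (∀ e ∈ N, ¬ e.IsDiag) ∧ (∀ e ∈ N, ∀ v ∈ e, v ∈ S) ∧
  (∀ v ∈ S, ∃! e, e ∈ N ∧ v ∈ e)

/-- The cyclic successor of `i` in the finite set `X`. -/
noncomputable def nextIn (X : Finset ℕ) (i : ℕ) : ℕ :=
  if h : (X.filter fun j => i < j).Nonempty then (X.filter fun j => i < j).min' h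
  else if h' : X.Nonempty then X.min' h' else 0

/-- The "segment" edges of an index set `X`: for each `i ∈ X`, joining the right endpoint
`2i` of the `i`-th deleted edge to the left endpoint `2·nextIn X i − 1` of the cyclically
next deleted edge (representing the path of the Hamiltonian cycle between them). -/
noncomputable def segEdges (X : Finset ℕ) : Finset (Sym2 ℕ) :=
  X.image fun i => s(2 * i, 2 * nextIn X i - 1)

/-- The sub-pattern `M[X]` of `M`: the edges of `M` lying inside `{2i−1, 2i : i ∈ X}`. -/
def subPat (M : Finset (Sym2 ℕ)) (X : Finset ℕ) : Finset (Sym2 ℕ) :=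
  M.filter fun e => e ∈ (pvs X).sym2

/-- The connection pattern `N` on index set `X` is feasible: a swap fitting into it turns
a Hamiltonian cycle into a single Hamiltonian cycle again.  Intrinsically: the (2-regular)
graph on `{2i−1, 2i : i ∈ X}` consisting of the matching `N` together with the segment
edges of `X` is a single cycle, i.e. connected. -/
def FeasiblePat (N : Finset (Sym2 ℕ)) (X : Finset ℕ) : Prop :=
  ∀ u ∈ pvs X, ∀ v ∈ pvs X,
    (SimpleGraph.fromEdgeSet ((N ∪ segEdges X : Finset (Sym2 ℕ)) : Set (Sym2 ℕ))).Reachable u v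

/-- The connection pattern `N` on index set `X` is sequential:
`N ∪ {{2i−1, 2i} : i ∈ X}` forms a single (simple) cycle. -/
def SequentialPat (N : Finset (Sym2 ℕ)) (X : Finset ℕ) : Prop :=
  ∀ u ∈ pvs X, ∀ v ∈ pvs X,
    (SimpleGraph.fromEdgeSet
      ((N ∪ X.image fun i => s(2 * i - 1, 2 * i) : Finset (Sym2 ℕ)) : Set (Sym2 ℕ))).Reachable u v

/-- A connection `k`-pattern `M` is reducible if it decomposes into two feasible patterns
(two moves). -/
def Reducible (M : Finset (Sym2 ℕ)) (k : ℕ) : Prop :=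
  ∃ X Y : Finset ℕ, X ∪ Y = Finset.Icc 1 k ∧ Disjoint X Y ∧ X.Nonempty ∧ Y.Nonempty ∧
    IsMatchingOn (subPat M X) (pvs X) ∧ IsMatchingOn (subPat M Y) (pvs Y) ∧
    FeasiblePat (subPat M X) X ∧ FeasiblePat (subPat M Y) Y

/-- The number of interactions between index sets `X` and `Y` inside `[k]`. -/
def numInteractions (k : ℕ) (X Y : Finset ℕ) : ℕ :=
  ((Finset.Icc 1 (k - 1)).filter fun i =>
    (i ∈ X ∧ i + 1 ∈ Y) ∨ (i ∈ Y ∧ i + 1 ∈ X)).card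

/-- The pattern obtained from `M` by swapping `i` and `i+1`: exchange the matching
partners of `2i−1` and `2i+1`, and exchange the matching partners of `2i` and `2i+2`. -/
def swapAdjPat (M : Finset (Sym2 ℕ)) (i : ℕ) : Finset (Sym2 ℕ) :=
  M.image (Sym2.map fun m => Equiv.swap (2 * i - 1) (2 * i + 1) (Equiv.swap (2 * i) (2 * i + 2) m))

/-!  Swaps on a concrete Hamiltonian cycle, and how they fit into connection patterns.
The Hamiltonian cycle is given by an enumeration `cyc` of the vertices, bijective from
`{1, …, n}`; its edges in cyclic order are `e_i = {cyc i, cyc (i mod n + 1)}`. -/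

/-- The `i`-th edge of the Hamiltonian cycle enumerated by `cyc`. -/
def cycEdge {V : Type} (cyc : ℕ → V) (n i : ℕ) : Sym2 V :=
  s(cyc i, cyc (i % n + 1))

/-- The edge set of the Hamiltonian cycle enumerated by `cyc`. -/
def cycEdges {V : Type} [DecidableEq V] (cyc : ℕ → V) (n : ℕ) : Finset (Sym2 V) :=
  (Finset.Icc 1 n).image (cycEdge cyc n)

/-- Given an embedding `f`, the vertex of the Hamiltonian cycle corresponding to the
pattern vertex `m ∈ [2k]`: pattern vertex `2i−1` is the left endpoint `cyc (f i)` of the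
deleted edge `e_{f i}`, and pattern vertex `2i` is its right endpoint. -/
def ptMap {V : Type} (cyc : ℕ → V) (n : ℕ) (f : ℕ → ℕ) (m : ℕ) : V :=
  if m % 2 = 1 then cyc (f ((m + 1) / 2)) else cyc (f (m / 2) % n + 1)

/-- The pair `(f, N)` of an embedding and a connection pattern on index set `X` describes
the swap `(Em, Ep)`: `Em` consists of the cycle edges indexed by the image of `f`, and
`Ep` consists of the edges of `N` transported along the correspondence between pattern
vertices and endpoints of deleted edges. -/
def DescribedBy {V : Type} [DecidableEq V] (cyc : ℕ → V) (n : ℕ) (X : Finset ℕ)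
    (f : ℕ → ℕ) (N : Finset (Sym2 ℕ)) (Em Ep : Finset (Sym2 V)) : Prop :=
  Em = X.image (fun i => cycEdge cyc n (f i)) ∧
  Ep = N.image (Sym2.map (ptMap cyc n f))

/-- The swap `(Em, Ep)` fits into the connection pattern `N` on index set `X`: some
increasing embedding `f : X → [n]` together with `N` describes `(Em, Ep)`. -/
def FitsInto {V : Type} [DecidableEq V] (cyc : ℕ → V) (n : ℕ) (X : Finset ℕ)
    (N : Finset (Sym2 ℕ)) (Em Ep : Finset (Sym2 V)) : Prop :=
  ∃ f : ℕ → ℕ, StrictMonoOn f (X : Set ℕ) ∧ (∀ i ∈ X, f i ∈ Finset.Icc 1 n) ∧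
    DescribedBy cyc n X f N Em Ep

/-- The multiset of endpoints of an unordered pair (a loop contributes its vertex twice). -/
def Sym2.toMul {V : Type} : Sym2 V → Multiset V :=
  Sym2.lift ⟨fun a b => {a, b}, fun a b => Multiset.pair_comm a b⟩

/-- The multiset of endpoints of a multiset of edges. -/
def endpointsM {V : Type} (F : Multiset (Sym2 V)) : Multiset V :=
  F.bind Sym2.toMul

/-- A finite set `D` of unordered pairs of vertices forms a Hamiltonian cycle (on all of
`V`): it has no loops, every vertex lies on exactly two of its edges, and the graph it
spans is connected. -/
def IsHamCycleSet {V : Type} [Fintype V] [DecidableEq V] (D : Finset (Sym2 V)) : Prop :=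
  (∀ e ∈ D, ¬ e.IsDiag) ∧
  (∀ v : V, (D.filter fun e => v ∈ e).card = 2) ∧
  (SimpleGraph.fromEdgeSet (D : Set (Sym2 V))).Connected

/-!
A reducible pattern splits as `M = M[X] ⊎ M[Y]` with both parts feasible, and the swap splits
accordingly into the two swaps that `M[X]` and `M[Y]` describe through the same embedding.
Each of them is a genuine move. Its edge set is connected because the pattern graph of a
feasible pattern is, each segment edge being realised by the untouched cycle path between
consecutive deleted edges. Every vertex keeps degree two: the deleted and the added edges at a
vertex are both counted by the pattern vertices mapped to it. Feasibility also forbids a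
matching edge from the end of one deleted edge to the start of the next, which is exactly what
would produce a loop or re-add a surviving cycle edge. Both moves have fewer than `k` edges, so
neither is improving, and their gains add up to the gain of the whole swap.
-/

lemma SimpleGraph.Reachable.mem_of_adj_closed {α : Type*} {G : SimpleGraph α} {u v : α}
    (h : G.Reachable u v) {S : Set α} (hS : ∀ a b, G.Adj a b → a ∈ S → b ∈ S) (hu : u ∈ S) :
    v ∈ S := by
  obtain ⟨p⟩ := h
  induction p with
  | nil => exact hu
  | cons hadj _ ih => exact ih (hS _ _ hadj hu)

lemma SimpleGraph.Reachable.map_of_adj {α β : Type*} {G : SimpleGraph α} {H : SimpleGraph β}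
    {u v : α} (h : G.Reachable u v) (φ : α → β)
    (hadj : ∀ a b, G.Adj a b → H.Reachable (φ a) (φ b)) : H.Reachable (φ u) (φ v) := by
  obtain ⟨p⟩ := h
  induction p with
  | nil => exact SimpleGraph.Reachable.refl _
  | cons hab _ ih => exact (hadj _ _ hab).trans ih

lemma card_filter_sdiff_union_add {α : Type*} [DecidableEq α] {D A B : Finset α} (hAD : A ⊆ D)
    (hdisj : Disjoint (D \ A) B) (p : α → Prop) [DecidablePred p] :
    ((D \ A ∪ B).filter p).card + (A.filter p).card = (D.filter p).card + (B.filter p).card := by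
  have hsdiff : (D \ A).filter p = D.filter p \ A.filter p := by
    ext a
    simp only [Finset.mem_filter, Finset.mem_sdiff]
    tauto
  rw [Finset.filter_union, Finset.card_union_of_disjoint (Finset.disjoint_filter_filter hdisj),
    hsdiff]
  have := Finset.card_sdiff_add_card_eq_card (Finset.filter_subset_filter p hAD)
  omega

/-- Position `m` steps further along the cycle from position `p ∈ [n]`. -/
def cycShift (n p m : ℕ) : ℕ := (p - 1 + m) % n + 1

section CycShift

variable {n p q m : ℕ}

lemma cycShift_mem_Icc (hn : 0 < n) (p m : ℕ) : cycShift n p m ∈ Finset.Icc 1 n := by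
  have := Nat.mod_lt (p - 1 + m) hn
  simp only [cycShift, Finset.mem_Icc]
  omega

lemma cycShift_of_add_le (hp : 0 < p) (h : p + m ≤ n) : cycShift n p m = p + m := by
  rw [cycShift, Nat.mod_eq_of_lt (by omega)]
  omega

lemma cycShift_of_lt_add (hp : 0 < p) (h : n < p + m) (h' : p + m ≤ 2 * n) :
    cycShift n p m = p + m - n := by
  rw [cycShift, show p - 1 + m = (p + m - 1 - n) + n by omega, Nat.add_mod_right,
    Nat.mod_eq_of_lt (by omega)]
  omega

lemma cycShift_zero (hp : p ∈ Finset.Icc 1 n) : cycShift n p 0 = p := by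
  rw [Finset.mem_Icc] at hp
  exact cycShift_of_add_le (by omega) (by omega)

lemma cycShift_one (hp : 0 < p) : cycShift n p 1 = p % n + 1 := by
  rw [cycShift, Nat.sub_add_cancel hp]

lemma cycShift_cycShift (a b : ℕ) :
    cycShift n (cycShift n p a) b = cycShift n p (a + b) := by
  simp only [cycShift, Nat.add_sub_cancel, Nat.mod_add_mod, Nat.add_assoc]

lemma cycShift_sub_add (hp : p ∈ Finset.Icc 1 n) (hq : q ∈ Finset.Icc 1 n) :
    cycShift n p (q + n - p) = q := by
  rw [Finset.mem_Icc] at hp hq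
  rw [cycShift, show p - 1 + (q + n - p) = q - 1 + n by omega, Nat.add_mod_right,
    Nat.mod_eq_of_lt (by omega)]
  omega

lemma cycShift_ne_self (hp : p ∈ Finset.Icc 1 n) (hm : 0 < m) (hmn : m < n) :
    cycShift n p m ≠ p := by
  rw [Finset.mem_Icc] at hp
  rcases le_or_gt (p + m) n with h | h
  · rw [cycShift_of_add_le (by omega) h]; omega
  · rw [cycShift_of_lt_add (by omega) h (by omega)]; omega

lemma cycShift_left_injOn (m : ℕ) : Set.InjOn (cycShift n · m) (Finset.Icc 1 n) := by
  intro p hp q hq h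
  rw [Finset.coe_Icc, Set.mem_Icc] at hp hq
  have hmod : p - 1 + m ≡ q - 1 + m [MOD n] := Nat.succ_injective h
  have := (Nat.ModEq.add_right_cancel' m hmod).eq_of_lt_of_lt (by omega) (by omega)
  omega

end CycShift

lemma mem_pvs {X : Finset ℕ} {a : ℕ} : a ∈ pvs X ↔ ∃ i ∈ X, a = 2 * i - 1 ∨ a = 2 * i := by
  simp [pvs]

lemma pvs_union (X Y : Finset ℕ) : pvs (X ∪ Y) = pvs X ∪ pvs Y :=
  Finset.union_biUnion

lemma disjoint_pvs {X Y : Finset ℕ} (hX : ∀ i ∈ X, 0 < i) (hY : ∀ i ∈ Y, 0 < i)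
    (h : Disjoint X Y) : Disjoint (pvs X) (pvs Y) := by
  rw [Finset.disjoint_left]
  intro a haX haY
  obtain ⟨i, hi, hai⟩ := mem_pvs.1 haX
  obtain ⟨j, hj, haj⟩ := mem_pvs.1 haY
  have := hX i hi
  have := hY j hj
  obtain rfl : i = j := by omega
  exact Finset.disjoint_left.1 h hi hj

def deletedPat (X : Finset ℕ) : Finset (Sym2 ℕ) :=
  X.image fun i => s(2 * i - 1, 2 * i)

lemma isMatchingOn_deletedPat {X : Finset ℕ} (hX : ∀ i ∈ X, 0 < i) :
    IsMatchingOn (deletedPat X) (pvs X) := by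
  simp only [IsMatchingOn, deletedPat, Finset.forall_mem_image]
  refine ⟨fun i hi => ?_, fun i hi v hv => mem_pvs.2 ⟨i, hi, Sym2.mem_iff.1 hv⟩, fun v hv => ?_⟩
  · have := hX i hi
    rw [Sym2.mk_isDiag_iff]
    omega
  · obtain ⟨i, hi, hvi⟩ := mem_pvs.1 hv
    refine ⟨s(2 * i - 1, 2 * i), ⟨Finset.mem_image_of_mem _ hi, Sym2.mem_iff.2 hvi⟩, ?_⟩
    rintro _ ⟨he, hve⟩
    obtain ⟨j, hj, rfl⟩ := Finset.mem_image.1 he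
    have := hX i hi
    have := hX j hj
    obtain rfl : j = i := by rcases Sym2.mem_iff.1 hve with h | h <;> omega
    rfl

lemma IsMatchingOn.card_eq_two_mul {N : Finset (Sym2 ℕ)} {S : Finset ℕ}
    (h : IsMatchingOn N S) : S.card = 2 * N.card := by
  have above : ∀ v ∈ S, (N.bipartiteAbove (· ∈ ·) v).card = 1 := by
    intro v hv
    obtain ⟨e, he, huniq⟩ := h.2.2 v hv
    rw [Finset.card_eq_one]
    exact ⟨e, Finset.eq_singleton_iff_unique_mem.2
      ⟨Finset.mem_filter.2 he, fun e' he' => huniq e' (Finset.mem_filter.1 he')⟩⟩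
  have below : ∀ e ∈ N, (S.bipartiteBelow (· ∈ ·) e).card = 2 := by
    intro e he
    induction e using Sym2.ind with | _ x y => ?_
    rw [Finset.card_eq_two]
    refine ⟨x, y, fun hxy => h.1 _ he (Sym2.mk_isDiag_iff.2 hxy), ?_⟩
    ext v
    simp only [Finset.bipartiteBelow, Finset.mem_filter, Sym2.mem_iff, Finset.mem_insert,
      Finset.mem_singleton, and_iff_right_iff_imp]
    exact fun hv => h.2.1 _ he v (Sym2.mem_iff.2 hv)
  have key := Finset.sum_card_bipartiteAbove_eq_sum_card_bipartiteBelow (s := S) (t := N)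
    (r := (· ∈ ·))
  rw [Finset.sum_congr rfl above, Finset.sum_congr rfl below] at key
  simpa [mul_comm] using key

lemma card_pvs {X : Finset ℕ} (hX : ∀ i ∈ X, 0 < i) : (pvs X).card = 2 * X.card := by
  rw [(isMatchingOn_deletedPat hX).card_eq_two_mul, deletedPat, Finset.card_image_of_injOn]
  intro i hi j hj h
  have := hX i hi
  have := hX j hj
  rcases Sym2.eq_iff.1 h with ⟨-, h⟩ | ⟨h, -⟩ <;> omega

lemma disjoint_subPat_and_union_eq {M : Finset (Sym2 ℕ)} {X Y : Finset ℕ}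
    (hM : IsMatchingOn M (pvs (X ∪ Y))) (hMX : IsMatchingOn (subPat M X) (pvs X))
    (hMY : IsMatchingOn (subPat M Y) (pvs Y)) (hX : ∀ i ∈ X, 0 < i) (hY : ∀ i ∈ Y, 0 < i)
    (hXY : Disjoint X Y) :
    Disjoint (subPat M X) (subPat M Y) ∧ subPat M X ∪ subPat M Y = M := by
  have hpvs := disjoint_pvs hX hY hXY
  have hdisj : Disjoint (subPat M X) (subPat M Y) := by
    rw [Finset.disjoint_left]
    intro e heX heY
    exact Finset.disjoint_left.1 hpvs
      (Finset.mem_sym2_iff.1 (Finset.mem_filter.1 heX).2 _ e.out_fst_mem)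
      (Finset.mem_sym2_iff.1 (Finset.mem_filter.1 heY).2 _ e.out_fst_mem)
  refine ⟨hdisj, Finset.eq_of_subset_of_card_le
    (Finset.union_subset (Finset.filter_subset _ _) (Finset.filter_subset _ _)) ?_⟩
  have := hM.card_eq_two_mul
  have := hMX.card_eq_two_mul
  have := hMY.card_eq_two_mul
  rw [pvs_union, Finset.card_union_of_disjoint hpvs] at *
  rw [Finset.card_union_of_disjoint hdisj]
  omega

lemma IsMatchingOn.card_filter_mem_image_map {V : Type} [DecidableEq V] {N : Finset (Sym2 ℕ)}
    {S : Finset ℕ} (h : IsMatchingOn N S) {φ : ℕ → V} (hinj : Set.InjOn (Sym2.map φ) N)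
    (hloop : ∀ e ∈ N, ¬ (e.map φ).IsDiag) (v : V) :
    ((N.image (Sym2.map φ)).filter (v ∈ ·)).card = (S.filter (φ · = v)).card := by
  rw [Finset.filter_image,
    Finset.card_image_of_injOn (hinj.mono (Finset.coe_subset.2 (Finset.filter_subset _ _)))]
  have above : ∀ a ∈ S.filter (φ · = v),
      ((N.filter (v ∈ Sym2.map φ ·)).bipartiteAbove (· ∈ ·) a).card = 1 := by
    intro a ha
    obtain ⟨haS, rfl⟩ := Finset.mem_filter.1 ha
    obtain ⟨e, ⟨heN, hae⟩, huniq⟩ := h.2.2 a haS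
    rw [Finset.card_eq_one]
    refine ⟨e, Finset.eq_singleton_iff_unique_mem.2 ⟨?_, fun e' he' => ?_⟩⟩
    · exact Finset.mem_filter.2 ⟨Finset.mem_filter.2 ⟨heN, Sym2.mem_map.2 ⟨a, hae, rfl⟩⟩, hae⟩
    · obtain ⟨he'N, hae'⟩ := Finset.mem_filter.1 he'
      exact huniq e' ⟨(Finset.mem_filter.1 he'N).1, hae'⟩
  have below_mk : ∀ x y, s(x, y) ∈ N → φ x = v →
      ((S.filter (φ · = v)).bipartiteBelow (· ∈ ·) s(x, y)).card = 1 := by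
    intro x y hxy hx
    have hy : φ y ≠ v := fun hy => hloop _ hxy (by rw [Sym2.map_mk, hx, hy]; rfl)
    rw [Finset.card_eq_one]
    refine ⟨x, Finset.eq_singleton_iff_unique_mem.2 ⟨?_, fun a ha => ?_⟩⟩
    · exact Finset.mem_filter.2
        ⟨Finset.mem_filter.2 ⟨h.2.1 _ hxy x (Sym2.mem_mk_left x y), hx⟩, Sym2.mem_mk_left x y⟩
    · obtain ⟨haS, hae⟩ := Finset.mem_filter.1 ha
      rcases Sym2.mem_iff.1 hae with rfl | rfl
      · rfl
      · exact absurd (Finset.mem_filter.1 haS).2 hy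
  have below : ∀ e ∈ N.filter (v ∈ Sym2.map φ ·),
      ((S.filter (φ · = v)).bipartiteBelow (· ∈ ·) e).card = 1 := by
    intro e he
    obtain ⟨heN, hve⟩ := Finset.mem_filter.1 he
    induction e using Sym2.ind with | _ x y => ?_
    rw [Sym2.map_mk, Sym2.mem_iff] at hve
    rcases hve with hx | hy
    · exact below_mk x y heN hx.symm
    · rw [Sym2.eq_swap]
      exact below_mk y x (Sym2.eq_swap ▸ heN) hy.symm
  have key := Finset.sum_card_bipartiteAbove_eq_sum_card_bipartiteBelow
    (s := S.filter (φ · = v)) (t := N.filter (v ∈ Sym2.map φ ·)) (r := (· ∈ ·))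
  rw [Finset.sum_congr rfl above, Finset.sum_congr rfl below] at key
  simpa using key.symm

section NextIn

variable {X : Finset ℕ} {i j : ℕ}

lemma nextIn_mem (hX : X.Nonempty) (i : ℕ) : nextIn X i ∈ X := by
  unfold nextIn
  split_ifs with h
  · exact Finset.mem_of_mem_filter _ (Finset.min'_mem _ h)
  · exact Finset.min'_mem _ hX

lemma lt_nextIn_le (hj : j ∈ X) (hij : i < j) : i < nextIn X i ∧ nextIn X i ≤ j := by
  have hne : (X.filter (i < ·)).Nonempty := ⟨j, Finset.mem_filter.2 ⟨hj, hij⟩⟩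
  rw [nextIn, dif_pos hne]
  exact ⟨(Finset.mem_filter.1 (Finset.min'_mem _ hne)).2,
    Finset.min'_le _ _ (Finset.mem_filter.2 ⟨hj, hij⟩)⟩

lemma nextIn_le_of_forall_le (h : ∀ j ∈ X, j ≤ i) (hj : j ∈ X) : nextIn X i ≤ j := by
  have hne : ¬ (X.filter (i < ·)).Nonempty := fun ⟨l, hl⟩ =>
    (Finset.mem_filter.1 hl).2.not_ge (h l (Finset.mem_filter.1 hl).1)
  rw [nextIn, dif_neg hne, dif_pos ⟨j, hj⟩]
  exact Finset.min'_le _ _ hj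

lemma nextIn_injOn (X : Finset ℕ) : Set.InjOn (nextIn X) X := by
  suffices ∀ i ∈ X, ∀ j ∈ X, i < j → nextIn X i ≠ nextIn X j by
    intro i hi j hj h
    by_contra hne
    rcases lt_or_gt_of_ne hne with hlt | hlt
    exacts [this i hi j hj hlt h, this j hj i hi hlt h.symm]
  intro i hi j hj hij
  obtain ⟨hi_lt, hi_le⟩ := lt_nextIn_le hj hij
  by_cases hup : ∃ l ∈ X, j < l
  · obtain ⟨l, hl, hjl⟩ := hup
    exact ((lt_nextIn_le hl hjl).1.trans_le' hi_le).ne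
  · push Not at hup
    exact ((nextIn_le_of_forall_le hup hi).trans_lt hi_lt).ne'

end NextIn

structure IsCycEmbedding (n : ℕ) (X : Finset ℕ) (f : ℕ → ℕ) : Prop where
  pos : ∀ i ∈ X, 0 < i
  strictMonoOn : StrictMonoOn f X
  mem_Icc : ∀ i ∈ X, f i ∈ Finset.Icc 1 n

namespace IsCycEmbedding

variable {n : ℕ} {X : Finset ℕ} {f : ℕ → ℕ} {i j m : ℕ}

lemma mono (he : IsCycEmbedding n X f) {Y : Finset ℕ} (hYX : Y ⊆ X) : IsCycEmbedding n Y f :=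
  ⟨fun i hi => he.pos i (hYX hi), he.strictMonoOn.mono (Finset.coe_subset.2 hYX),
    fun i hi => he.mem_Icc i (hYX hi)⟩

lemma exists_cycShift_eq_nextIn (he : IsCycEmbedding n X f) (hi : i ∈ X) :
    ∃ m, 0 < m ∧ cycShift n (f i) m = f (nextIn X i) ∧
      ∀ l, 0 < l → l < m → cycShift n (f i) l ∉ X.image f := by
  have hnext := nextIn_mem ⟨i, hi⟩ i
  have hfi := Finset.mem_Icc.1 (he.mem_Icc i hi)
  have hfj := Finset.mem_Icc.1 (he.mem_Icc _ hnext)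
  have hmono := he.strictMonoOn
  simp only [Finset.mem_image, not_exists, not_and]
  by_cases hup : ∃ j ∈ X, i < j
  · obtain ⟨j, hj, hij⟩ := hup
    have hflt : f i < f (nextIn X i) := hmono hi hnext (lt_nextIn_le hj hij).1
    refine ⟨f (nextIn X i) - f i, by omega, by rw [cycShift_of_add_le] <;> omega, ?_⟩
    intro l hl hlm x hx hfx
    rw [cycShift_of_add_le (by omega) (by omega)] at hfx
    have hix : i < x := (hmono.lt_iff_lt hi hx).1 (by omega)
    have := (hmono.lt_iff_lt hx hnext).1 (by omega)
    have := (lt_nextIn_le hx hix).2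
    omega
  · push Not at hup
    have hfle : f (nextIn X i) ≤ f i := hmono.monotoneOn hnext hi (hup _ hnext)
    refine ⟨n - f i + f (nextIn X i), by omega, by rw [cycShift_of_lt_add] <;> omega, ?_⟩
    intro l hl hlm x hx hfx
    rcases le_or_gt (f i + l) n with h | h
    · rw [cycShift_of_add_le (by omega) h] at hfx
      have := (hmono.lt_iff_lt hi hx).1 (by omega)
      have := hup x hx
      omega
    · rw [cycShift_of_lt_add (by omega) h (by omega)] at hfx
      have := (hmono.lt_iff_lt hx hnext).1 (by omega)
      have := nextIn_le_of_forall_le hup hx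
      omega

lemma eq_nextIn (he : IsCycEmbedding n X f) (hi : i ∈ X) (hj : j ∈ X) (hm : 0 < m)
    (hfj : cycShift n (f i) m = f j)
    (hgap : ∀ l, 0 < l → l < m → cycShift n (f i) l ∉ X.image f) : j = nextIn X i := by
  obtain ⟨m', hm', hfm', hgap'⟩ := he.exists_cycShift_eq_nextIn hi
  have hnext := nextIn_mem ⟨i, hi⟩ i
  rcases lt_trichotomy m m' with h | rfl | h
  · exact absurd (Finset.mem_image_of_mem f hj) (hfj ▸ hgap' m hm h)
  · exact he.strictMonoOn.injOn hj hnext (hfj.symm.trans hfm')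
  · exact absurd (Finset.mem_image_of_mem f hnext) (hfm' ▸ hgap m' hm' h)

end IsCycEmbedding

section Feasible

variable {N : Finset (Sym2 ℕ)} {X : Finset ℕ} {i : ℕ}

/-- The edge would close up a two-vertex cycle in the pattern graph. -/
lemma FeasiblePat.segEdge_not_mem (hfeas : FeasiblePat N X) (hN : IsMatchingOn N (pvs X))
    (hX : ∀ i ∈ X, 0 < i) (hi : i ∈ X) (hne : nextIn X i ≠ i) :
    s(2 * i, 2 * nextIn X i - 1) ∉ N := by
  intro hmem
  have hj : nextIn X i ∈ X := nextIn_mem ⟨i, hi⟩ i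
  generalize hj_def : nextIn X i = j at *
  have := hX i hi
  have := hX j hj
  have hclosed : ∀ a b, (SimpleGraph.fromEdgeSet ((N ∪ segEdges X : Finset (Sym2 ℕ)) :
      Set (Sym2 ℕ))).Adj a b → a ∈ ({2 * i, 2 * j - 1} : Set ℕ) →
      b ∈ ({2 * i, 2 * j - 1} : Set ℕ) := by
    intro a b hab ha
    simp only [SimpleGraph.fromEdgeSet_adj, Finset.coe_union, Set.mem_union,
      Finset.mem_coe] at hab
    obtain ⟨hab | hab, -⟩ := hab
    · have haP : a ∈ pvs X := hN.2.1 _ hab a (Sym2.mem_mk_left a b)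
      have : s(a, b) = s(2 * i, 2 * j - 1) := (hN.2.2 a haP).unique
        ⟨hab, Sym2.mem_mk_left a b⟩ ⟨hmem, by rcases ha with rfl | rfl <;> simp⟩
      have hb : b ∈ s(2 * i, 2 * j - 1) := this ▸ Sym2.mem_mk_right a b
      rcases Sym2.mem_iff.1 hb with rfl | rfl <;> simp
    · obtain ⟨l, hl, hseg⟩ := Finset.mem_image.1 hab
      have := hX l hl
      have := hX _ (nextIn_mem ⟨i, hi⟩ l)
      rcases ha with rfl | rfl <;> rcases Sym2.eq_iff.1 hseg with ⟨h1, h2⟩ | ⟨h1, h2⟩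
      · obtain rfl : l = i := by omega
        simp [← h2, hj_def]
      · omega
      · omega
      · obtain rfl : l = i := nextIn_injOn X hl hi (by omega)
        simp [← h1]
  have h2j := (hfeas _ (mem_pvs.2 ⟨i, hi, Or.inr rfl⟩) _
    (mem_pvs.2 ⟨j, hj, Or.inr rfl⟩)).mem_of_adj_closed hclosed (Set.mem_insert _ _)
  rcases h2j with h | h
  · exact hne (by omega)
  · simp only [Set.mem_singleton_iff] at h
    omega

/-- `e_{f v}` is the first deleted edge after `e_{f u}`, so `s(2u, 2v - 1)` is a segment
edge. -/
lemma FeasiblePat.not_mem_of_consecutive {n : ℕ} {f : ℕ → ℕ} {u v m : ℕ}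
    (hfeas : FeasiblePat N X) (hN : IsMatchingOn N (pvs X)) (he : IsCycEmbedding n X f)
    (hu : u ∈ X) (hv : v ∈ X) (hm : 0 < m) (hmn : m < n) (hfv : cycShift n (f u) m = f v)
    (hgap : ∀ l, 0 < l → l < m → cycShift n (f u) l ∉ X.image f) :
    s(2 * u, 2 * v - 1) ∉ N := by
  obtain rfl := he.eq_nextIn hu hv hm hfv hgap
  refine hfeas.segEdge_not_mem hN he.pos hu fun h => ?_
  rw [h] at hfv
  exact cycShift_ne_self (he.mem_Icc u hu) hm hmn hfv

end Feasible

section CycleMap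

variable {V : Type} {cyc : ℕ → V} {n p i : ℕ} {f : ℕ → ℕ} {X : Finset ℕ}

lemma cycEdge_eq (hp : 0 < p) : cycEdge cyc n p = s(cyc p, cyc (cycShift n p 1)) := by
  rw [cycEdge, cycShift_one hp]

lemma cycEdge_not_isDiag (hn : 1 < n) (hcyc : Set.InjOn cyc (Finset.Icc 1 n))
    (hp : p ∈ Finset.Icc 1 n) : ¬ (cycEdge cyc n p).IsDiag := by
  rw [cycEdge_eq (Finset.mem_Icc.1 hp).1, Sym2.mk_isDiag_iff]
  exact fun h => cycShift_ne_self hp one_pos hn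
    (hcyc (cycShift_mem_Icc (by omega) p 1) hp h.symm)

lemma cycEdge_injOn (hn : 2 < n) (hcyc : Set.InjOn cyc (Finset.Icc 1 n)) :
    Set.InjOn (cycEdge cyc n) (Finset.Icc 1 n) := by
  intro p hp q hq h
  have hp0 := (Finset.mem_Icc.1 hp).1
  have hq0 := (Finset.mem_Icc.1 hq).1
  rw [cycEdge_eq hp0, cycEdge_eq hq0] at h
  rcases Sym2.eq_iff.1 h with ⟨h1, -⟩ | ⟨h1, h2⟩
  · exact hcyc hp hq h1
  · have hpq := hcyc hp (cycShift_mem_Icc (by omega) q 1) h1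
    have hqp := hcyc (cycShift_mem_Icc (by omega) p 1) hq h2
    rw [← hqp, cycShift_cycShift] at hpq
    exact absurd hpq.symm (cycShift_ne_self hp two_pos hn)

lemma three_le_of_two_le_card_cycEdges [DecidableEq V]
    (h : 2 ≤ (cycEdges cyc n).card) : 3 ≤ n := by
  have hle : (cycEdges cyc n).card ≤ n :=
    Finset.card_image_le.trans (by rw [Nat.card_Icc, Nat.add_sub_cancel])
  by_contra hlt
  obtain rfl : n = 2 := by omega
  have h21 : cycEdge cyc 2 2 = cycEdge cyc 2 1 := Sym2.eq_swap
  rw [cycEdges, show Finset.Icc 1 2 = {1, 2} by decide, Finset.image_insert,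
    Finset.image_singleton, h21, Finset.insert_eq_of_mem (Finset.mem_singleton_self _),
    Finset.card_singleton] at h
  omega

lemma ptMap_two_mul_sub_one (hi : 0 < i) : ptMap cyc n f (2 * i - 1) = cyc (f i) := by
  rw [ptMap, if_pos (by omega), show (2 * i - 1 + 1) / 2 = i by omega]

lemma ptMap_two_mul (hfi : 0 < f i) :
    ptMap cyc n f (2 * i) = cyc (cycShift n (f i) 1) := by
  rw [ptMap, if_neg (by omega), Nat.mul_div_cancel_left i two_pos, cycShift_one hfi]

namespace IsCycEmbedding

lemma exists_ptMap_eq (he : IsCycEmbedding n X f) {a : ℕ} (ha : a ∈ pvs X) :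
    ∃ i ∈ X, (a = 2 * i - 1 ∧ ptMap cyc n f a = cyc (f i)) ∨
      (a = 2 * i ∧ ptMap cyc n f a = cyc (cycShift n (f i) 1)) := by
  obtain ⟨i, hi, rfl | rfl⟩ := mem_pvs.1 ha
  · exact ⟨i, hi, Or.inl ⟨rfl, ptMap_two_mul_sub_one (he.pos i hi)⟩⟩
  · exact ⟨i, hi, Or.inr ⟨rfl, ptMap_two_mul (Finset.mem_Icc.1 (he.mem_Icc i hi)).1⟩⟩

lemma map_ptMap_deletedEdge (he : IsCycEmbedding n X f) (hi : i ∈ X) :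
    Sym2.map (ptMap cyc n f) s(2 * i - 1, 2 * i) = cycEdge cyc n (f i) := by
  have hfi := (Finset.mem_Icc.1 (he.mem_Icc i hi)).1
  rw [Sym2.map_mk, ptMap_two_mul_sub_one (he.pos i hi), ptMap_two_mul hfi, cycEdge_eq hfi]

lemma image_deletedPat [DecidableEq V] (he : IsCycEmbedding n X f) :
    (deletedPat X).image (Sym2.map (ptMap cyc n f)) = X.image fun i => cycEdge cyc n (f i) := by
  rw [deletedPat, Finset.image_image]
  exact Finset.image_congr fun i hi => he.map_ptMap_deletedEdge hi

lemma image_cycEdge_subset [DecidableEq V] (he : IsCycEmbedding n X f) :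
    (X.image fun i => cycEdge cyc n (f i)) ⊆ cycEdges cyc n :=
  Finset.image_subset_iff.2 fun i hi => Finset.mem_image_of_mem _ (he.mem_Icc i hi)

lemma injOn_cycEdge (he : IsCycEmbedding n X f) (hn : 2 < n)
    (hcyc : Set.InjOn cyc (Finset.Icc 1 n)) :
    Set.InjOn (fun i => cycEdge cyc n (f i)) X :=
  fun i hi j hj h => he.strictMonoOn.injOn hi hj
    (cycEdge_injOn hn hcyc (he.mem_Icc i hi) (he.mem_Icc j hj) h)

end IsCycEmbedding

end CycleMap

section FeasibleImage

variable {V : Type} {cyc : ℕ → V} {n : ℕ} {f : ℕ → ℕ} {X : Finset ℕ} {N : Finset (Sym2 ℕ)}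

lemma FeasiblePat.not_isDiag_map_ptMap (hfeas : FeasiblePat N X) (hN : IsMatchingOn N (pvs X))
    (he : IsCycEmbedding n X f) (hn : 1 < n) (hcyc : Set.InjOn cyc (Finset.Icc 1 n))
    {e : Sym2 ℕ} (heN : e ∈ N) : ¬ (e.map (ptMap cyc n f)).IsDiag := by
  induction e using Sym2.ind with | _ x y => ?_
  rw [Sym2.map_mk, Sym2.mk_isDiag_iff]
  intro hxy
  have hne : x ≠ y := fun h => hN.1 _ heN (Sym2.mk_isDiag_iff.2 h)
  have hshift := fun i => cycShift_mem_Icc (n := n) (by omega) (f i) 1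
  have hcross : ∀ i ∈ X, ∀ j ∈ X, s(2 * j, 2 * i - 1) ∈ N → f i ≠ cycShift n (f j) 1 :=
    fun i hi j hj hmem h => hfeas.not_mem_of_consecutive hN he hj hi one_pos hn h.symm
      (fun l hl hl1 => absurd hl1 (by omega)) hmem
  have hyP := hN.2.1 _ heN y (Sym2.mem_mk_right x y)
  have hxP := hN.2.1 _ heN x (Sym2.mem_mk_left x y)
  obtain ⟨i, hi, ⟨rfl, hx⟩ | ⟨rfl, hx⟩⟩ := he.exists_ptMap_eq (cyc := cyc) hxP
  <;> obtain ⟨j, hj, ⟨rfl, hy⟩ | ⟨rfl, hy⟩⟩ := he.exists_ptMap_eq (cyc := cyc) hyP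
  <;> rw [hx, hy] at hxy
  · obtain rfl := he.strictMonoOn.injOn hi hj (hcyc (he.mem_Icc i hi) (he.mem_Icc j hj) hxy)
    exact hne rfl
  · exact hcross i hi j hj (Sym2.eq_swap ▸ heN) (hcyc (he.mem_Icc i hi) (hshift j) hxy)
  · exact hcross j hj i hi heN (hcyc (he.mem_Icc j hj) (hshift i) hxy.symm)
  · obtain rfl := he.strictMonoOn.injOn hi hj (cycShift_left_injOn 1 (he.mem_Icc i hi)
      (he.mem_Icc j hj) (hcyc (hshift i) (hshift j) hxy))
    exact hne rfl

lemma FeasiblePat.map_ptMap_ne_cycEdge (hfeas : FeasiblePat N X) (hN : IsMatchingOn N (pvs X))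
    (he : IsCycEmbedding n X f) (hn : 2 < n) (hcyc : Set.InjOn cyc (Finset.Icc 1 n))
    {q : ℕ} (hq : q ∈ Finset.Icc 1 n) (hqX : q ∉ X.image f) {e : Sym2 ℕ} (heN : e ∈ N) :
    e.map (ptMap cyc n f) ≠ cycEdge cyc n q := by
  have hshift := fun p m => cycShift_mem_Icc (n := n) (by omega) p m
  have key : ∀ x y, s(x, y) ∈ N → ptMap cyc n f x = cyc q →
      ptMap cyc n f y ≠ cyc (cycShift n q 1) := by
    intro x y hxy hx hy
    have hyP := hN.2.1 _ hxy y (Sym2.mem_mk_right x y)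
    obtain ⟨i, hi, ⟨rfl, hx'⟩ | ⟨rfl, hx'⟩⟩ :=
      he.exists_ptMap_eq (hN.2.1 _ hxy x (Sym2.mem_mk_left x y))
    · exact hqX (Finset.mem_image.2 ⟨i, hi, hcyc (he.mem_Icc i hi) hq (hx'.symm.trans hx)⟩)
    have hqi : q = cycShift n (f i) 1 := hcyc hq (hshift _ _) (hx.symm.trans hx')
    obtain ⟨j, hj, ⟨rfl, hy'⟩ | ⟨rfl, hy'⟩⟩ := he.exists_ptMap_eq (cyc := cyc) hyP
    · have hfj : cycShift n (f i) 2 = f j := by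
        rw [show 2 = 1 + 1 from rfl, ← cycShift_cycShift, ← hqi]
        exact hcyc (hshift _ _) (he.mem_Icc j hj) (hy.symm.trans hy')
      refine hfeas.not_mem_of_consecutive hN he hi hj two_pos hn hfj (fun l hl hl2 => ?_) hxy
      obtain rfl : l = 1 := by omega
      rwa [← hqi]
    · exact hqX (Finset.mem_image.2 ⟨j, hj, cycShift_left_injOn 1 (he.mem_Icc j hj) hq
        (hcyc (hshift _ _) (hshift _ _) (hy'.symm.trans hy))⟩)
  induction e using Sym2.ind with | _ x y => ?_
  rw [Sym2.map_mk, cycEdge_eq (Finset.mem_Icc.1 hq).1]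
  intro h
  rcases Sym2.eq_iff.1 h with ⟨hx, hy⟩ | ⟨hy, hx⟩
  · exact key x y heN hx hy
  · exact key y x (Sym2.eq_swap ▸ heN) hx hy

end FeasibleImage

section CycleWalk

variable {V : Type} {G : SimpleGraph V} {cyc : ℕ → V} {n : ℕ} {P : Finset ℕ}

lemma reachable_cycShift (hn : 0 < n)
    (hadj : ∀ p ∈ Finset.Icc 1 n, p ∉ P → G.Adj (cyc p) (cyc (cycShift n p 1)))
    {p : ℕ} (hp : p ∈ Finset.Icc 1 n) (m : ℕ) (hgap : ∀ l < m, cycShift n p l ∉ P) :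
    G.Reachable (cyc p) (cyc (cycShift n p m)) := by
  induction m with
  | zero => rw [cycShift_zero hp]
  | succ m ih =>
    refine (ih fun l hl => hgap l (by omega)).trans ?_
    rw [← cycShift_cycShift]
    exact (hadj _ (cycShift_mem_Icc hn p m) (hgap m (by omega))).reachable

lemma exists_reachable_mem (hn : 0 < n)
    (hadj : ∀ p ∈ Finset.Icc 1 n, p ∉ P → G.Adj (cyc p) (cyc (cycShift n p 1)))
    (hcyc : Set.SurjOn cyc (Set.Icc 1 n) Set.univ) {q : ℕ} (hq : q ∈ P)
    (hqn : q ∈ Finset.Icc 1 n) (v : V) : ∃ p ∈ P, G.Reachable v (cyc p) := by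
  obtain ⟨p, hp, rfl⟩ := hcyc (Set.mem_univ v)
  have hp' : p ∈ Finset.Icc 1 n := by simpa using hp
  have hex : ∃ m, cycShift n p m ∈ P := ⟨q + n - p, by rwa [cycShift_sub_add hp' hqn]⟩
  exact ⟨_, Nat.find_spec hex, reachable_cycShift hn hadj hp' _ fun l hl => Nat.find_min hex hl⟩

lemma IsCycEmbedding.reachable_nextIn {X : Finset ℕ} {f : ℕ → ℕ} {i : ℕ}
    (he : IsCycEmbedding n X f) (hn : 0 < n)
    (hadj : ∀ p ∈ Finset.Icc 1 n, p ∉ X.image f → G.Adj (cyc p) (cyc (cycShift n p 1)))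
    (hi : i ∈ X) : G.Reachable (cyc (cycShift n (f i) 1)) (cyc (f (nextIn X i))) := by
  obtain ⟨m, hm, hfm, hgap⟩ := he.exists_cycShift_eq_nextIn hi
  have := reachable_cycShift hn hadj (cycShift_mem_Icc hn _ 1) (m - 1) fun l hl => by
    rw [cycShift_cycShift]
    exact hgap _ (by omega) (by omega)
  rwa [cycShift_cycShift, Nat.add_sub_cancel' hm, hfm] at this

end CycleWalk

/-- The edge set `(𝒞 ∖ E⁻) ∪ E⁺` obtained from the cycle by the swap that `(f, N)` describes
on the index set `X`. -/
def swapResult {V : Type} [DecidableEq V] (cyc : ℕ → V) (n : ℕ) (f : ℕ → ℕ) (X : Finset ℕ)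
    (N : Finset (Sym2 ℕ)) : Finset (Sym2 V) :=
  (cycEdges cyc n \ X.image fun i => cycEdge cyc n (f i)) ∪ N.image (Sym2.map (ptMap cyc n f))

section SwapResult

variable {V : Type} [DecidableEq V] {cyc : ℕ → V} {n : ℕ} {f : ℕ → ℕ} {X : Finset ℕ}
  {N : Finset (Sym2 ℕ)}

lemma adj_swapResult (he : IsCycEmbedding n X f) (hn : 2 < n)
    (hcyc : Set.InjOn cyc (Finset.Icc 1 n)) {p : ℕ} (hp : p ∈ Finset.Icc 1 n)
    (hpX : p ∉ X.image f) :
    (SimpleGraph.fromEdgeSet (swapResult cyc n f X N : Set (Sym2 V))).Adj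
      (cyc p) (cyc (cycShift n p 1)) := by
  have hloop := cycEdge_not_isDiag (by omega) hcyc hp
  rw [cycEdge_eq (Finset.mem_Icc.1 hp).1, Sym2.mk_isDiag_iff] at hloop
  rw [SimpleGraph.fromEdgeSet_adj, ← cycEdge_eq (Finset.mem_Icc.1 hp).1]
  refine ⟨Finset.mem_union_left _ (Finset.mem_sdiff.2 ⟨Finset.mem_image_of_mem _ hp, ?_⟩), hloop⟩
  intro hmem
  obtain ⟨i, hi, h⟩ := Finset.mem_image.1 hmem
  exact hpX (Finset.mem_image.2 ⟨i, hi, cycEdge_injOn hn hcyc (he.mem_Icc i hi) hp h⟩)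

/-- Matching edges become edges of the new tour, and segment edges become the untouched
paths of the cycle between consecutive deleted edges. -/
lemma FeasiblePat.reachable_swapResult (hfeas : FeasiblePat N X) (hN : IsMatchingOn N (pvs X))
    (he : IsCycEmbedding n X f) (hn : 2 < n) (hcyc : Set.InjOn cyc (Finset.Icc 1 n)) {a b : ℕ}
    (hab : (SimpleGraph.fromEdgeSet ((N ∪ segEdges X : Finset (Sym2 ℕ)) : Set (Sym2 ℕ))).Adj a b) :
    (SimpleGraph.fromEdgeSet (swapResult cyc n f X N : Set (Sym2 V))).Reachable
      (ptMap cyc n f a) (ptMap cyc n f b) := by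
  simp only [SimpleGraph.fromEdgeSet_adj, Finset.coe_union, Set.mem_union,
    Finset.mem_coe] at hab
  obtain ⟨hab | hab, -⟩ := hab
  · have hloop := hfeas.not_isDiag_map_ptMap hN he (by omega) hcyc hab
    rw [Sym2.map_mk, Sym2.mk_isDiag_iff] at hloop
    refine ((SimpleGraph.fromEdgeSet_adj _).2 ⟨?_, hloop⟩).reachable
    exact Finset.mem_union_right _ (Sym2.map_mk _ a b ▸ Finset.mem_image_of_mem _ hab)
  · obtain ⟨l, hl, hseg⟩ := Finset.mem_image.1 hab
    have hnext := nextIn_mem ⟨l, hl⟩ l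
    have hpath := he.reachable_nextIn (cyc := cyc) (by omega)
      (fun p hp hpX => adj_swapResult (N := N) he hn hcyc hp hpX) hl
    rw [← ptMap_two_mul (cyc := cyc) (n := n) (Finset.mem_Icc.1 (he.mem_Icc l hl)).1,
      ← ptMap_two_mul_sub_one (cyc := cyc) (n := n) (f := f) (he.pos _ hnext)] at hpath
    rcases Sym2.eq_iff.1 hseg with ⟨rfl, rfl⟩ | ⟨rfl, rfl⟩
    exacts [hpath, hpath.symm]

lemma FeasiblePat.connected_swapResult (hfeas : FeasiblePat N X) (hN : IsMatchingOn N (pvs X))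
    (he : IsCycEmbedding n X f) (hX : X.Nonempty) (hn : 2 < n)
    (hcyc : Set.BijOn cyc (Set.Icc 1 n) Set.univ) :
    (SimpleGraph.fromEdgeSet (swapResult cyc n f X N : Set (Sym2 V))).Connected := by
  have hinj : Set.InjOn cyc (Finset.Icc 1 n) := by simpa using hcyc.injOn
  obtain ⟨i₀, hi₀⟩ := hX
  set G := SimpleGraph.fromEdgeSet (swapResult cyc n f X N : Set (Sym2 V))
  have hreach : ∀ v, ∃ i ∈ X, G.Reachable v (cyc (f i)) := by
    intro v
    obtain ⟨p, hp, hvp⟩ := exists_reachable_mem (by omega)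
      (fun p hp hpX => adj_swapResult he hn hinj hp hpX) hcyc.surjOn
      (Finset.mem_image_of_mem f hi₀) (he.mem_Icc i₀ hi₀) v
    obtain ⟨i, hi, rfl⟩ := Finset.mem_image.1 hp
    exact ⟨i, hi, hvp⟩
  rw [SimpleGraph.connected_iff]
  refine ⟨fun u v => ?_, ⟨cyc (f i₀)⟩⟩
  obtain ⟨i, hi, hu⟩ := hreach u
  obtain ⟨j, hj, hv⟩ := hreach v
  have hij := (hfeas _ (mem_pvs.2 ⟨i, hi, Or.inl rfl⟩) _
    (mem_pvs.2 ⟨j, hj, Or.inl rfl⟩)).map_of_adj (ptMap cyc n f)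
    fun a b hab => hfeas.reachable_swapResult hN he hn hinj hab
  rw [ptMap_two_mul_sub_one (he.pos i hi), ptMap_two_mul_sub_one (he.pos j hj)] at hij
  exact hu.trans (hij.trans hv.symm)

lemma FeasiblePat.card_filter_mem_swapResult [Fintype V] (hfeas : FeasiblePat N X)
    (hN : IsMatchingOn N (pvs X)) (he : IsCycEmbedding n X f) (hn : 2 < n)
    (hcyc : Set.InjOn cyc (Finset.Icc 1 n)) (hham : IsHamCycleSet (cycEdges cyc n))
    (hinj : Set.InjOn (Sym2.map (ptMap cyc n f)) N) (v : V) :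
    ((swapResult cyc n f X N).filter (v ∈ ·)).card = 2 := by
  have hdisj : Disjoint (cycEdges cyc n \ X.image fun i => cycEdge cyc n (f i))
      (N.image (Sym2.map (ptMap cyc n f))) := by
    simp only [Finset.disjoint_left, Finset.mem_sdiff, cycEdges, Finset.mem_image, not_exists,
      not_and]
    rintro _ ⟨⟨q, hq, rfl⟩, hqX⟩ e heN he'
    refine hfeas.map_ptMap_ne_cycEdge hN he hn hcyc hq (fun hqX' => ?_) heN he'
    obtain ⟨i, hi, rfl⟩ := Finset.mem_image.1 hqX'
    exact hqX i hi rfl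
  have hdelInj : Set.InjOn (Sym2.map (ptMap cyc n f)) (deletedPat X) := by
    simp only [deletedPat, Finset.coe_image, Set.InjOn, Set.forall_mem_image]
    intro i hi j hj h
    rw [he.map_ptMap_deletedEdge hi, he.map_ptMap_deletedEdge hj] at h
    rw [he.injOn_cycEdge hn hcyc hi hj h]
  have hdelLoop : ∀ e ∈ deletedPat X, ¬ (e.map (ptMap cyc n f)).IsDiag := by
    simp only [deletedPat, Finset.forall_mem_image]
    intro i hi
    rw [he.map_ptMap_deletedEdge hi]
    exact cycEdge_not_isDiag (by omega) hcyc (he.mem_Icc i hi)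
  have hdel := (isMatchingOn_deletedPat he.pos).card_filter_mem_image_map hdelInj hdelLoop v
  have hadd := hN.card_filter_mem_image_map hinj
    (fun e heN => hfeas.not_isDiag_map_ptMap hN he (by omega) hcyc heN) v
  have hcount := card_filter_sdiff_union_add he.image_cycEdge_subset hdisj (v ∈ ·)
  rw [he.image_deletedPat] at hdel
  have := hham.2.1 v
  unfold swapResult
  omega

lemma FeasiblePat.isHamCycleSet_swapResult [Fintype V] (hfeas : FeasiblePat N X)
    (hN : IsMatchingOn N (pvs X)) (he : IsCycEmbedding n X f) (hX : X.Nonempty) (hn : 2 < n)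
    (hcyc : Set.BijOn cyc (Set.Icc 1 n) Set.univ) (hham : IsHamCycleSet (cycEdges cyc n))
    (hinj : Set.InjOn (Sym2.map (ptMap cyc n f)) N) :
    IsHamCycleSet (swapResult cyc n f X N) := by
  have hcyc' : Set.InjOn cyc (Finset.Icc 1 n) := by simpa using hcyc.injOn
  refine ⟨fun e heS => ?_, hfeas.card_filter_mem_swapResult hN he hn hcyc' hham hinj,
    hfeas.connected_swapResult hN he hX hn hcyc⟩
  rcases Finset.mem_union.1 heS with h | h
  · exact hham.1 e (Finset.mem_sdiff.1 h).1
  · obtain ⟨e, heN, rfl⟩ := Finset.mem_image.1 h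
    exact hfeas.not_isDiag_map_ptMap hN he (by omega) hcyc' heN

lemma FeasiblePat.sum_cycEdge_le [Fintype V] {w : Sym2 V → ℤ} (hfeas : FeasiblePat N X)
    (hN : IsMatchingOn N (pvs X)) (he : IsCycEmbedding n X f) (hX : X.Nonempty) (hn : 2 < n)
    (hcyc : Set.BijOn cyc (Set.Icc 1 n) Set.univ) (hham : IsHamCycleSet (cycEdges cyc n))
    (hinj : Set.InjOn (Sym2.map (ptMap cyc n f)) N)
    (hno : ∀ Fm Fp : Finset (Sym2 V), Fm ⊆ cycEdges cyc n → Fm.card = X.card →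
      Fp.card = X.card → IsHamCycleSet ((cycEdges cyc n \ Fm) ∪ Fp) →
      ¬ (∑ e ∈ Fp, w e < ∑ e ∈ Fm, w e)) :
    ∑ i ∈ X, w (cycEdge cyc n (f i)) ≤ ∑ e ∈ N, w (e.map (ptMap cyc n f)) := by
  have hinjX := he.injOn_cycEdge hn (by simpa using hcyc.injOn)
  have hcard : N.card = X.card := by
    have := hN.card_eq_two_mul
    rw [card_pvs he.pos] at this
    omega
  have := hno _ _ he.image_cycEdge_subset (Finset.card_image_of_injOn hinjX)
    (by rw [Finset.card_image_of_injOn hinj, hcard])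
    (hfeas.isHamCycleSet_swapResult hN he hX hn hcyc hham hinj)
  rwa [not_lt, Finset.sum_image hinjX, Finset.sum_image hinj] at this

end SwapResult

theorem no_improving_swap_fits_reducible_general {V : Type} [Fintype V] [DecidableEq V]
    (n k : ℕ) (cyc : ℕ → V) (w : Sym2 V → ℤ)
    (hcyc : Set.BijOn cyc (Set.Icc 1 n) Set.univ)
    (hham : IsHamCycleSet (cycEdges cyc n))
    (hno : ∀ k' < k, ∀ Fm Fp : Finset (Sym2 V),
      Fm ⊆ cycEdges cyc n → Fm.card = k' → Fp.card = k' →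
      IsHamCycleSet ((cycEdges cyc n \ Fm) ∪ Fp) →
      ¬ (∑ e ∈ Fp, w e < ∑ e ∈ Fm, w e)) :
    ∀ (M : Finset (Sym2 ℕ)) (Em Ep : Finset (Sym2 V)),
      IsMatchingOn M (pvs (Finset.Icc 1 k)) →
      Reducible M k →
      Em ⊆ cycEdges cyc n → Em.card = k → Ep.card = k →
      endpointsM Em.val = endpointsM Ep.val →
      FitsInto cyc n (Finset.Icc 1 k) M Em Ep →
      ¬ (∑ e ∈ Ep, w e < ∑ e ∈ Em, w e) := by
  rintro M Em Ep hM ⟨X, Y, hXY, hdisj, hX, hY, hMX, hMY, hfeasX, hfeasY⟩ hEm hEmk hEpk -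
    ⟨f, hf, hfn, rfl, rfl⟩ hlt
  have he : IsCycEmbedding n (Finset.Icc 1 k) f := ⟨fun i hi => (Finset.mem_Icc.1 hi).1, hf, hfn⟩
  have heX := he.mono (hXY ▸ Finset.subset_union_left)
  have heY := he.mono (hXY ▸ Finset.subset_union_right)
  have hk : X.card + Y.card = k := by
    rw [← Finset.card_union_of_disjoint hdisj, hXY, Nat.card_Icc, Nat.add_sub_cancel]
  have hXk : X.card < k := by have := hY.card_pos; omega
  have hYk : Y.card < k := by have := hX.card_pos; omega
  have hn : 2 < n :=
    three_le_of_two_le_card_cycEdges (cyc := cyc) (by have := Finset.card_le_card hEm; omega)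
  have hMk : k = M.card := by simpa [card_pvs he.pos] using hM.card_eq_two_mul
  have hinjEm :=
    Finset.injOn_of_card_image_eq (hEmk.trans (by rw [Nat.card_Icc, Nat.add_sub_cancel]))
  have hinjEp := Finset.injOn_of_card_image_eq (hEpk.trans hMk)
  rw [← hXY] at hM
  obtain ⟨hdisjM, hsplit⟩ := disjoint_subPat_and_union_eq hM hMX hMY heX.pos heY.pos hdisj
  have hleX := hfeasX.sum_cycEdge_le hMX heX hX hn hcyc hham
    (hinjEp.mono (Finset.coe_subset.2 (Finset.filter_subset _ _))) (hno _ hXk)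
  have hleY := hfeasY.sum_cycEdge_le hMY heY hY hn hcyc hham
    (hinjEp.mono (Finset.coe_subset.2 (Finset.filter_subset _ _))) (hno _ hYk)
  rw [Finset.sum_image hinjEm, Finset.sum_image hinjEp, ← hXY, Finset.sum_union hdisj, ← hsplit,
    Finset.sum_union hdisjM] at hlt
  omega

/-- Let `cyc` enumerate a Hamiltonian cycle of an edge-weighted graph on `n` vertices and
suppose that for every `k' < k` there is no improving `k'`-move on it.  Then no improving
`k`-swap fits into a reducible connection `k`-pattern. -/
theorem no_improving_swap_fits_reducible {V : Type} [Fintype V] [DecidableEq V]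
    (n k : ℕ) (cyc : ℕ → V) (w : Sym2 V → ℤ)
    (hn : n = Fintype.card V)
    (hcyc : Set.BijOn cyc (Set.Icc 1 n) Set.univ)
    (hham : IsHamCycleSet (cycEdges cyc n))
    (hno : ∀ k' < k, ∀ Fm Fp : Finset (Sym2 V),
      Fm ⊆ cycEdges cyc n → Fm.card = k' → Fp.card = k' →
      IsHamCycleSet ((cycEdges cyc n \ Fm) ∪ Fp) →
      ¬ (∑ e ∈ Fp, w e < ∑ e ∈ Fm, w e)) :
    ∀ (M : Finset (Sym2 ℕ)) (Em Ep : Finset (Sym2 V)),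
      IsMatchingOn M (pvs (Finset.Icc 1 k)) →
      Reducible M k →
      Em ⊆ cycEdges cyc n → Em.card = k → Ep.card = k →
      endpointsM Em.val = endpointsM Ep.val →
      FitsInto cyc n (Finset.Icc 1 k) M Em Ep →
      ¬ (∑ e ∈ Ep, w e < ∑ e ∈ Em, w e) :=
  no_improving_swap_fits_reducible_general n k cyc w hcyc hham hno
end

section
/- Every sequential ℓ-swap (E⁻, E⁺) on a Hamiltonian cycle 𝒞 fits into at least one sequential connection pattern. -/
/-- The pair of `l`-element edge sets `(Em, Ep)` is sequential: there is a single closed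
walk of length `2l` alternately using edges of `Em` and of `Ep` that visits all edges of
`Em ∪ Ep`. -/
def IsSeqSwap {V : Type} (Em Ep : Finset (Sym2 V)) (l : ℕ) : Prop :=
  ∃ v : ℕ → V, v (2 * l) = v 0 ∧
    (∀ i < 2 * l, i % 2 = 0 → s(v i, v (i + 1)) ∈ Em) ∧
    (∀ i < 2 * l, i % 2 = 1 → s(v i, v (i + 1)) ∈ Ep) ∧
    (∀ e ∈ Em, ∃ i < 2 * l, i % 2 = 0 ∧ e = s(v i, v (i + 1))) ∧
    (∀ e ∈ Ep, ∃ i < 2 * l, i % 2 = 1 ∧ e = s(v i, v (i + 1)))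

/-- Every sequential `l`-swap `(Em, Ep)` on a Hamiltonian cycle (enumerated by `cyc`)
fits into at least one sequential connection pattern. -/
theorem sequential_swap_fits_sequential_pattern {V : Type} [Fintype V] [DecidableEq V]
    (n l : ℕ) (cyc : ℕ → V)
    (hn : n = Fintype.card V)
    (hcyc : Set.BijOn cyc (Set.Icc 1 n) Set.univ)
    (hham : IsHamCycleSet (cycEdges cyc n))
    (Em Ep : Finset (Sym2 V))
    (hEm : Em ⊆ cycEdges cyc n) (hlm : Em.card = l) (hlp : Ep.card = l)
    (hends : endpointsM Em.val = endpointsM Ep.val)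
    (hseq : IsSeqSwap Em Ep l) :
    ∃ N : Finset (Sym2 ℕ),
      IsMatchingOn N (pvs (Finset.Icc 1 l)) ∧
      SequentialPat N (Finset.Icc 1 l) ∧
      FitsInto cyc n (Finset.Icc 1 l) N Em Ep := by
  classical
  rcases Nat.eq_zero_or_pos l with rfl | hl
  · -- degenerate case l = 0
    have hEm0 : Em = ∅ := Finset.card_eq_zero.mp hlm
    have hEp0 : Ep = ∅ := Finset.card_eq_zero.mp hlp
    have hI : Finset.Icc 1 0 = ∅ := by simp
    have hP : pvs (Finset.Icc 1 0) = ∅ := by rw [hI]; rfl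
    refine ⟨∅, ⟨by simp, by simp, ?_⟩, ?_, ?_⟩
    · intro u hu
      rw [hP] at hu
      exact absurd hu (Finset.notMem_empty u)
    · intro u hu
      rw [hP] at hu
      exact absurd hu (Finset.notMem_empty u)
    · exact ⟨id, fun a _ b _ h => h, by rw [hI]; simp, by rw [hEm0, hI]; simp,
        by rw [hEp0]; simp⟩
  · obtain ⟨v, hv0, hvm, hvp, hvm', hvp'⟩ := hseq
    have hl2 : 0 < 2 * l := by omega
    -- n ≥ 3
    have hn3 : 3 ≤ n := by
      by_contra hcon
      push_neg at hcon
      interval_cases n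
      · have hne : Nonempty V := hham.2.2.nonempty
        have : 0 < Fintype.card V := @Fintype.card_pos V _ hne
        omega
      · have h1 : (1:ℕ) ∈ Finset.Icc 1 1 := by simp
        have h2 : cycEdge cyc 1 1 ∈ cycEdges cyc 1 := Finset.mem_image_of_mem _ h1
        have h3 := hham.1 _ h2
        apply h3
        simp [cycEdge, Sym2.mk_isDiag_iff]
      · have hIcc : Finset.Icc 1 2 = {1, 2} := by decide
        have e1 : cycEdge cyc 2 1 = s(cyc 1, cyc 2) := by norm_num [cycEdge]
        have e2 : cycEdge cyc 2 2 = s(cyc 1, cyc 2) := by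
          rw [cycEdge]
          norm_num [Sym2.eq_swap]
        have hE : cycEdges cyc 2 = {s(cyc 1, cyc 2)} := by
          rw [cycEdges, hIcc, Finset.image_insert, Finset.image_singleton, e1, e2]
          simp
        have hcard := hham.2.1 (cyc 1)
        rw [hE] at hcard
        have hle := Finset.card_filter_le ({s(cyc 1, cyc 2)} : Finset (Sym2 V))
          (fun e => cyc 1 ∈ e)
        rw [hcard] at hle
        simp at hle
    -- injectivity of cyc on indices
    have hcycinj : ∀ a ∈ Finset.Icc 1 n, ∀ b ∈ Finset.Icc 1 n, cyc a = cyc b → a = b := by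
      intro a ha b hb h
      rw [Finset.mem_Icc] at ha hb
      exact hcyc.injOn (Set.mem_Icc.mpr ha) (Set.mem_Icc.mpr hb) h
    have hsig : ∀ a, a ∈ Finset.Icc 1 n → a % n + 1 ∈ Finset.Icc 1 n := by
      intro a ha
      rw [Finset.mem_Icc] at *
      have := Nat.mod_lt a (show 0 < n by omega)
      omega
    have hedge_inj : ∀ a ∈ Finset.Icc 1 n, ∀ b ∈ Finset.Icc 1 n,
        cycEdge cyc n a = cycEdge cyc n b → a = b := by
      intro a ha b hb h
      rw [cycEdge, cycEdge, Sym2.eq_iff] at h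
      rcases h with ⟨h1, _⟩ | ⟨h1, h2⟩
      · exact hcycinj a ha b hb h1
      · have e1 : a = b % n + 1 := hcycinj a ha _ (hsig b hb) h1
        have e2 : a % n + 1 = b := hcycinj _ (hsig a ha) b hb h2
        rw [Finset.mem_Icc] at ha hb
        have ha2 : a = n ∧ a % n = 0 ∨ a < n ∧ a % n = a := by
          rcases eq_or_lt_of_le ha.2 with h' | h'
          · exact Or.inl ⟨h', by rw [h']; exact Nat.mod_self n⟩
          · exact Or.inr ⟨h', Nat.mod_eq_of_lt h'⟩
        have hb2 : b = n ∧ b % n = 0 ∨ b < n ∧ b % n = b := by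
          rcases eq_or_lt_of_le hb.2 with h' | h'
          · exact Or.inl ⟨h', by rw [h']; exact Nat.mod_self n⟩
          · exact Or.inr ⟨h', Nat.mod_eq_of_lt h'⟩
        omega
    -- Em as image of edge indices
    set M : Finset ℕ := (Finset.Icc 1 n).filter (fun m => cycEdge cyc n m ∈ Em) with hMdef
    have hMsub : M ⊆ Finset.Icc 1 n := Finset.filter_subset _ _
    have hEmM : Em = M.image (cycEdge cyc n) := by
      apply Finset.Subset.antisymm
      · intro e he
        have hc : e ∈ cycEdges cyc n := hEm he
        rw [cycEdges] at hc
        obtain ⟨m, hm, rfl⟩ := Finset.mem_image.mp hc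
        exact Finset.mem_image_of_mem _ (Finset.mem_filter.mpr ⟨hm, he⟩)
      · intro e he
        obtain ⟨m, hm, rfl⟩ := Finset.mem_image.mp he
        exact (Finset.mem_filter.mp hm).2
    have himg : (M.image (cycEdge cyc n)).card = M.card :=
      Finset.card_image_of_injOn
        (fun a ha b hb hab =>
          hedge_inj a (hMsub (Finset.mem_coe.mp ha)) b (hMsub (Finset.mem_coe.mp hb)) hab)
    have hMcard : M.card = l := by
      rw [← hlm, hEmM]
      exact himg.symm
    -- the increasing enumeration F of M
    have hFex : ∃ F : ℕ → ℕ, StrictMonoOn F ↑(Finset.Icc 1 l) ∧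
        (∀ i ∈ Finset.Icc 1 l, F i ∈ M) ∧ (∀ m ∈ M, ∃ i ∈ Finset.Icc 1 l, F i = m) := by
      refine ⟨fun i => if h : i - 1 < l then M.orderEmbOfFin hMcard ⟨i - 1, h⟩ else 0,
        ?_, ?_, ?_⟩
      · intro a ha b hb hab
        rw [Finset.coe_Icc, Set.mem_Icc] at ha hb
        have h1 : a - 1 < l := by omega
        have h2 : b - 1 < l := by omega
        simp only [dif_pos h1, dif_pos h2]
        exact (M.orderEmbOfFin hMcard).strictMono (Fin.mk_lt_mk.mpr (by omega))
      · intro i hi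
        rw [Finset.mem_Icc] at hi
        have h1 : i - 1 < l := by omega
        simp only [dif_pos h1]
        exact M.orderEmbOfFin_mem hMcard _
      · intro m hm
        have hmr : m ∈ Set.range (M.orderEmbOfFin hMcard) := by
          rw [Finset.range_orderEmbOfFin]; exact hm
        obtain ⟨a, ha⟩ := hmr
        have hal := a.isLt
        refine ⟨a + 1, Finset.mem_Icc.mpr ⟨by omega, by omega⟩, ?_⟩
        have h1 : a + 1 - 1 < l := by omega
        simp only [dif_pos h1]
        have heq : (⟨a + 1 - 1, h1⟩ : Fin l) = a := by
          apply Fin.ext; simp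
        rw [heq]; exact ha
    obtain ⟨F, hFmono, hFmem, hFsurj⟩ := hFex
    have hFIcc : ∀ i ∈ Finset.Icc 1 l, F i ∈ Finset.Icc 1 n := fun i hi => hMsub (hFmem i hi)
    have hFinj : ∀ i ∈ Finset.Icc 1 l, ∀ i' ∈ Finset.Icc 1 l, F i = F i' → i = i' := by
      intro i hi i' hi' h
      exact hFmono.injOn (Finset.mem_coe.mpr hi) (Finset.mem_coe.mpr hi') h
    have hginj : ∀ i ∈ Finset.Icc 1 l, ∀ i' ∈ Finset.Icc 1 l,
        cycEdge cyc n (F i) = cycEdge cyc n (F i') → i = i' := by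
      intro i hi i' hi' h
      exact hFinj i hi i' hi' (hedge_inj _ (hFIcc i hi) _ (hFIcc i' hi') h)
    have hEmF : Em = (Finset.Icc 1 l).image (fun i => cycEdge cyc n (F i)) := by
      rw [hEmM]
      apply Finset.Subset.antisymm
      · intro e he
        obtain ⟨m, hm, rfl⟩ := Finset.mem_image.mp he
        obtain ⟨i, hi, rfl⟩ := hFsurj m hm
        exact Finset.mem_image_of_mem _ hi
      · intro e he
        obtain ⟨i, hi, rfl⟩ := Finset.mem_image.mp he
        exact Finset.mem_image_of_mem _ (hFmem i hi)
    -- the walk enumerates Em bijectively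
    have hgsur : (Finset.range l).image (fun j => s(v (2*j), v (2*j+1))) = Em := by
      apply Finset.Subset.antisymm
      · intro e he
        obtain ⟨j, hj, rfl⟩ := Finset.mem_image.mp he
        rw [Finset.mem_range] at hj
        exact hvm (2*j) (by omega) (by omega)
      · intro e he
        obtain ⟨i, hi, hpar, rfl⟩ := hvm' e he
        refine Finset.mem_image.mpr ⟨i / 2, Finset.mem_range.mpr (by omega), ?_⟩
        have h1 : 2 * (i/2) = i := by omega
        rw [h1]
    have hEm_inj : ∀ j < l, ∀ j' < l,
        s(v (2*j), v (2*j+1)) = s(v (2*j'), v (2*j'+1)) → j = j' := by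
      have hinjOn : Set.InjOn (fun j => s(v (2*j), v (2*j+1))) ↑(Finset.range l) :=
        Finset.card_image_iff.mp (by rw [hgsur, hlm, Finset.card_range])
      intro j hj j' hj' h
      exact hinjOn (by simp [hj]) (by simp [hj']) h
    have hEp0 : Ep = (Finset.range l).image (fun j => s(v (2*j+1), v (2*j+2))) := by
      apply Finset.Subset.antisymm
      · intro e he
        obtain ⟨i, hi, hpar, rfl⟩ := hvp' e he
        refine Finset.mem_image.mpr ⟨i / 2, Finset.mem_range.mpr (by omega), ?_⟩
        have h1 : 2 * (i/2) + 1 = i := by omega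
        have h2 : 2 * (i/2) + 2 = i + 1 := by omega
        rw [h1, h2]
      · intro e he
        obtain ⟨j, hj, rfl⟩ := Finset.mem_image.mp he
        rw [Finset.mem_range] at hj
        have h := hvp (2*j+1) (by omega) (by omega)
        have h2 : 2*j+1+1 = 2*j+2 := by omega
        rw [h2] at h
        exact h
    -- the index function
    have hidxE : ∀ j : ℕ, ∃ i, j < l →
        i ∈ Finset.Icc 1 l ∧ cycEdge cyc n (F i) = s(v (2*j), v (2*j+1)) := by
      intro j
      by_cases hj : j < l
      · have hmem : s(v (2*j), v (2*j+1)) ∈ Em := hvm (2*j) (by omega) (by omega)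
        rw [hEmF] at hmem
        obtain ⟨i, hi, he⟩ := Finset.mem_image.mp hmem
        exact ⟨i, fun _ => ⟨hi, he⟩⟩
      · exact ⟨1, fun h => absurd h hj⟩
    choose idx hidxP using hidxE
    have hidx_mem : ∀ j, j < l → idx j ∈ Finset.Icc 1 l := fun j hj => (hidxP j hj).1
    have hidx_spec : ∀ j, j < l → cycEdge cyc n (F (idx j)) = s(v (2*j), v (2*j+1)) :=
      fun j hj => (hidxP j hj).2
    have hidx_inj : ∀ j, j < l → ∀ j', j' < l → idx j = idx j' → j = j' := by
      intro j hj j' hj' h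
      apply hEm_inj j hj j' hj'
      rw [← hidx_spec j hj, ← hidx_spec j' hj', h]
    have hidx_surj : ∀ i ∈ Finset.Icc 1 l, ∃ j, j < l ∧ idx j = i := by
      intro i hi
      have hmem : cycEdge cyc n (F i) ∈ Em := by
        rw [hEmF]; exact Finset.mem_image_of_mem _ hi
      obtain ⟨p, hp, hpar, he⟩ := hvm' _ hmem
      refine ⟨p / 2, by omega, ?_⟩
      apply hginj _ (hidx_mem _ (by omega)) _ hi
      rw [hidx_spec (p/2) (by omega)]
      have h1 : 2 * (p/2) = p := by omega
      rw [h1, ← he]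
    -- endpoint structure of each deleted edge along the walk
    have hends' : ∀ j, j < l →
        (v (2*j) = cyc (F (idx j)) ∧ v (2*j+1) = cyc (F (idx j) % n + 1)) ∨
        (v (2*j+1) = cyc (F (idx j)) ∧ v (2*j) = cyc (F (idx j) % n + 1)) := by
      intro j hj
      have h := hidx_spec j hj
      rw [cycEdge, Sym2.eq_iff] at h
      rcases h with ⟨h1, h2⟩ | ⟨h1, h2⟩
      · exact Or.inl ⟨h1.symm, h2.symm⟩
      · exact Or.inr ⟨h1.symm, h2.symm⟩
    have hvne : ∀ j, j < l → v (2*j) ≠ v (2*j+1) := by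
      intro j hj
      have hd := hham.1 _ (hEm (hvm (2*j) (by omega) (by omega)))
      rw [Sym2.mk_isDiag_iff] at hd
      exact hd
    -- the pattern-vertex labelling along the walk
    obtain ⟨pi, hpidef⟩ : ∃ pi : ℕ → ℕ, ∀ p, pi p =
        if v (p % (2*l)) = cyc (F (idx (p % (2*l) / 2))) then 2 * idx (p % (2*l) / 2) - 1
        else 2 * idx (p % (2*l) / 2) :=
      ⟨fun p =>
        if v (p % (2*l)) = cyc (F (idx (p % (2*l) / 2))) then 2 * idx (p % (2*l) / 2) - 1
        else 2 * idx (p % (2*l) / 2), fun p => rfl⟩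
    have hpimod : ∀ p, pi p = pi (p % (2*l)) := by
      intro p
      rw [hpidef, hpidef, Nat.mod_mod_of_dvd p dvd_rfl]
    have hmain : ∀ q, q < 2*l →
        (pi q = 2 * idx (q/2) - 1 ∧ v q = cyc (F (idx (q/2)))) ∨
        (pi q = 2 * idx (q/2) ∧ v q = cyc (F (idx (q/2)) % n + 1)) := by
      intro q hq
      have hq' : q % (2*l) = q := Nat.mod_eq_of_lt hq
      rw [hpidef, hq']
      by_cases h : v q = cyc (F (idx (q/2)))
      · exact Or.inl ⟨if_pos h, h⟩
      · refine Or.inr ⟨if_neg h, ?_⟩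
        have hj : q / 2 < l := by omega
        rcases hends' (q/2) hj with ⟨h1, h2⟩ | ⟨h1, h2⟩ <;>
          rcases (by omega : q = 2*(q/2) ∨ q = 2*(q/2)+1) with hc | hc
        · rw [← hc] at h1; exact absurd h1 h
        · rw [← hc] at h2; exact h2
        · rw [← hc] at h2; exact h2
        · rw [← hc] at h1; exact absurd h1 h
    have hkey : ∀ q, q < 2*l → ∀ q', q' < 2*l → q / 2 = q' / 2 → v q = v q' → q = q' := by
      intro q hq q' hq' hdiv hvv
      by_contra hne
      have hj : q / 2 < l := by omega
      apply hvne (q/2) hj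
      rcases (by omega : (q = 2*(q/2) ∧ q' = 2*(q/2)+1) ∨ (q' = 2*(q/2) ∧ q = 2*(q/2)+1))
        with ⟨ha, hb⟩ | ⟨ha, hb⟩
      · rw [← hb, ← ha]; exact hvv
      · rw [← hb, ← ha]; exact hvv.symm
    have hpi_inj : ∀ q, q < 2*l → ∀ q', q' < 2*l → pi q = pi q' → q = q' := by
      intro q hq q' hq' hpe
      have hj : q / 2 < l := by omega
      have hj' : q' / 2 < l := by omega
      have hi1 := Finset.mem_Icc.mp (hidx_mem _ hj)
      have hi2 := Finset.mem_Icc.mp (hidx_mem _ hj')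
      rcases hmain q hq with ⟨e1, e2⟩ | ⟨e1, e2⟩ <;>
        rcases hmain q' hq' with ⟨f1, f2⟩ | ⟨f1, f2⟩ <;>
        rw [e1, f1] at hpe
      · have hjj : q/2 = q'/2 := hidx_inj _ hj _ hj' (by omega)
        exact hkey q hq q' hq' hjj (by rw [e2, f2, hjj])
      · omega
      · omega
      · have hjj : q/2 = q'/2 := hidx_inj _ hj _ hj' (by omega)
        exact hkey q hq q' hq' hjj (by rw [e2, f2, hjj])
    have hpimem : ∀ q, q < 2*l → pi q ∈ pvs (Finset.Icc 1 l) := by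
      intro q hq
      have hj : q / 2 < l := by omega
      rw [pvs]
      refine Finset.mem_biUnion.mpr ⟨idx (q/2), hidx_mem _ hj, ?_⟩
      rcases hmain q hq with ⟨e1, _⟩ | ⟨e1, _⟩ <;> rw [e1] <;> simp
    have hpisurj : ∀ u, u ∈ pvs (Finset.Icc 1 l) → ∃ q, q < 2*l ∧ pi q = u := by
      intro u hu
      rw [pvs] at hu
      obtain ⟨i, hi, hu2⟩ := Finset.mem_biUnion.mp hu
      obtain ⟨j, hj, rfl⟩ := hidx_surj i hi
      have d1 : (2*j)/2 = j := by omega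
      have d2 : (2*j+1)/2 = j := by omega
      have h1 := hmain (2*j) (by omega)
      have h2 := hmain (2*j+1) (by omega)
      rw [d1] at h1
      rw [d2] at h2
      simp only [Finset.mem_insert, Finset.mem_singleton] at hu2
      rcases h1 with ⟨a1, a2⟩ | ⟨a1, a2⟩ <;> rcases h2 with ⟨b1, b2⟩ | ⟨b1, b2⟩
      · exact absurd (a2.trans b2.symm) (hvne j hj)
      · rcases hu2 with rfl | rfl
        · exact ⟨2*j, by omega, a1⟩
        · exact ⟨2*j+1, by omega, b1⟩
      · rcases hu2 with rfl | rfl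
        · exact ⟨2*j+1, by omega, b1⟩
        · exact ⟨2*j, by omega, a1⟩
      · exact absurd (a2.trans b2.symm) (hvne j hj)
    have hptMap : ∀ q, q < 2*l → ptMap cyc n F (pi q) = v q := by
      intro q hq
      have hj : q / 2 < l := by omega
      have hi1 := Finset.mem_Icc.mp (hidx_mem _ hj)
      rcases hmain q hq with ⟨e1, e2⟩ | ⟨e1, e2⟩
      · rw [e1, ptMap, if_pos (by omega : (2 * idx (q/2) - 1) % 2 = 1)]
        have h2 : (2 * idx (q/2) - 1 + 1) / 2 = idx (q/2) := by omega
        rw [h2, ← e2]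
      · rw [e1, ptMap, if_neg (by omega : ¬ (2 * idx (q/2)) % 2 = 1)]
        have h2 : (2 * idx (q/2)) / 2 = idx (q/2) := by omega
        rw [h2, ← e2]
    have hptMap' : ∀ q, q ≤ 2*l → ptMap cyc n F (pi q) = v q := by
      intro q hq
      rcases lt_or_eq_of_le hq with h | h
      · exact hptMap q h
      · subst h
        rw [hpimod (2*l), Nat.mod_self, hv0]
        exact hptMap 0 (by omega)
    -- the connection pattern
    set N : Finset (Sym2 ℕ) := (Finset.range l).image (fun j => s(pi (2*j+1), pi (2*j+2)))
      with hNdef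
    have hNmem : ∀ e, e ∈ N ↔ ∃ j, j < l ∧ e = s(pi (2*j+1), pi (2*j+2)) := by
      intro e
      rw [hNdef]
      constructor
      · intro he
        obtain ⟨j, hj, he2⟩ := Finset.mem_image.mp he
        exact ⟨j, Finset.mem_range.mp hj, he2.symm⟩
      · rintro ⟨j, hj, rfl⟩
        exact Finset.mem_image_of_mem _ (Finset.mem_range.mpr hj)
    have hmod2 : ∀ j, j < l → pi (2*j+2) = pi ((2*j+2) % (2*l)) := fun j _ => hpimod _
    have hmodlt : ∀ j, j < l → (2*j+2) % (2*l) < 2*l := fun j _ => Nat.mod_lt _ (by omega)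
    have hmodne : ∀ j, j < l → (2*j+2) % (2*l) ≠ 2*j+1 := by
      intro j hj
      rcases (by omega : 2*j+2 < 2*l ∨ 2*j+2 = 2*l) with h | h
      · rw [Nat.mod_eq_of_lt h]; omega
      · rw [h, Nat.mod_self]; omega
    have hNedge_ne : ∀ j, j < l → pi (2*j+1) ≠ pi (2*j+2) := by
      intro j hj h
      rw [hmod2 j hj] at h
      exact hmodne j hj (hpi_inj _ (hmodlt j hj) _ (by omega) h.symm)
    refine ⟨N, ⟨?_, ?_, ?_⟩, ?_, ?_⟩
    · -- no diagonal edges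
      intro e he
      obtain ⟨j, hj, rfl⟩ := (hNmem e).mp he
      rw [Sym2.mk_isDiag_iff]
      exact hNedge_ne j hj
    · -- edges lie inside pvs
      intro e he w hw
      obtain ⟨j, hj, rfl⟩ := (hNmem e).mp he
      rw [Sym2.mem_iff] at hw
      rcases hw with rfl | rfl
      · exact hpimem _ (by omega)
      · rw [hmod2 j hj]; exact hpimem _ (hmodlt j hj)
    · -- each pattern vertex on exactly one edge
      intro u hu
      obtain ⟨q, hq, rfl⟩ := hpisurj u hu
      have hex : ∃ j, j < l ∧ (q = 2*j+1 ∨ q = (2*j+2) % (2*l)) := by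
        rcases (by omega : q % 2 = 1 ∨ (q % 2 = 0 ∧ q = 0) ∨ (q % 2 = 0 ∧ 2 ≤ q))
          with h | ⟨h, h0⟩ | ⟨h, h2⟩
        · exact ⟨q/2, by omega, Or.inl (by omega)⟩
        · refine ⟨l - 1, by omega, Or.inr ?_⟩
          have hh : 2*(l-1)+2 = 2*l := by omega
          rw [hh, Nat.mod_self]
          exact h0
        · refine ⟨q/2 - 1, by omega, Or.inr ?_⟩
          have h3 : 2*(q/2-1)+2 = q := by omega
          rw [h3, Nat.mod_eq_of_lt hq]
      obtain ⟨j, hj, hqe⟩ := hex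
      refine ⟨s(pi (2*j+1), pi (2*j+2)), ⟨(hNmem _).mpr ⟨j, hj, rfl⟩, ?_⟩, ?_⟩
      · rcases hqe with h | h
        · rw [h]; exact Sym2.mem_mk_left _ _
        · rw [h, ← hmod2 j hj]; exact Sym2.mem_mk_right _ _
      · rintro e' ⟨he', hue'⟩
        obtain ⟨j', hj', rfl⟩ := (hNmem e').mp he'
        rw [Sym2.mem_iff] at hue'
        have hqe' : q = 2*j'+1 ∨ q = (2*j'+2) % (2*l) := by
          rcases hue' with h | h
          · exact Or.inl (hpi_inj q hq _ (by omega) h)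
          · rw [hmod2 j' hj'] at h
            exact Or.inr (hpi_inj q hq _ (hmodlt j' hj') h)
        have hA : (2*j+2) % (2*l) = 2*j+2 ∨ ((2*j+2) % (2*l) = 0 ∧ 2*j+2 = 2*l) := by
          rcases (by omega : 2*j+2 < 2*l ∨ 2*j+2 = 2*l) with h | h
          · exact Or.inl (Nat.mod_eq_of_lt h)
          · exact Or.inr ⟨by rw [h]; exact Nat.mod_self _, h⟩
        have hB : (2*j'+2) % (2*l) = 2*j'+2 ∨ ((2*j'+2) % (2*l) = 0 ∧ 2*j'+2 = 2*l) := by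
          rcases (by omega : 2*j'+2 < 2*l ∨ 2*j'+2 = 2*l) with h | h
          · exact Or.inl (Nat.mod_eq_of_lt h)
          · exact Or.inr ⟨by rw [h]; exact Nat.mod_self _, h⟩
        have hjj : j' = j := by omega
        subst hjj
        rfl
    · -- sequentiality
      intro u hu w hw
      have hreach : ∀ q, q < 2*l →
          (SimpleGraph.fromEdgeSet
            ((N ∪ (Finset.Icc 1 l).image (fun i => s(2*i-1, 2*i)) : Finset (Sym2 ℕ)) :
              Set (Sym2 ℕ))).Reachable (pi 0) (pi q) := by
        intro q
        induction q with
        | zero => exact fun _ => SimpleGraph.Reachable.refl _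
        | succ p ih =>
          intro hq
          have hp : p < 2*l := by omega
          refine (ih hp).trans (SimpleGraph.Adj.reachable ?_)
          rw [SimpleGraph.fromEdgeSet_adj]
          refine ⟨?_, fun hc => by have := hpi_inj p hp (p+1) hq hc; omega⟩
          rcases (by omega : p % 2 = 0 ∨ p % 2 = 1) with hpar | hpar
          · have hj : p / 2 < l := by omega
            have hd : (p+1)/2 = p/2 := by omega
            have e1 := hmain p hp
            have e2 := hmain (p+1) hq
            rw [hd] at e2
            have hne : pi p ≠ pi (p+1) := fun hc => by
              have := hpi_inj p hp (p+1) hq hc; omega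
            have hedge : s(pi p, pi (p+1)) = s(2 * idx (p/2) - 1, 2 * idx (p/2)) := by
              rcases e1 with ⟨a1, _⟩ | ⟨a1, _⟩ <;> rcases e2 with ⟨b1, _⟩ | ⟨b1, _⟩
              · exact absurd (a1.trans b1.symm) hne
              · rw [a1, b1]
              · rw [a1, b1]; exact Sym2.eq_swap
              · exact absurd (a1.trans b1.symm) hne
            rw [hedge]
            exact Finset.mem_coe.mpr
              (Finset.mem_union_right _ (Finset.mem_image_of_mem _ (hidx_mem _ hj)))
          · have hj : p / 2 < l := by omega
            have h1 : 2*(p/2)+1 = p := by omega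
            have h2 : 2*(p/2)+2 = p+1 := by omega
            refine Finset.mem_coe.mpr
              (Finset.mem_union_left _ ((hNmem _).mpr ⟨p/2, hj, ?_⟩))
            rw [h1, h2]
      obtain ⟨qu, hqu, rfl⟩ := hpisurj u hu
      obtain ⟨qw, hqw, rfl⟩ := hpisurj w hw
      exact (hreach qu hqu).symm.trans (hreach qw hqw)
    · -- FitsInto
      refine ⟨F, hFmono, hFIcc, hEmF, ?_⟩
      rw [hEp0, hNdef, Finset.image_image]
      apply Finset.image_congr
      intro j hj
      have hjl : j < l := by simpa using hj
      show s(v (2*j+1), v (2*j+2)) = Sym2.map (ptMap cyc n F) s(pi (2*j+1), pi (2*j+2))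
      rw [Sym2.map_pair_eq, hptMap' (2*j+1) (by omega), hptMap' (2*j+2) (by omega)]
end
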